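/- Let n ≥ 2, let m ∈ {0,1,…,n−1} with gcd(n, m) = 1, and let F(x) = circ(f_0(x),…,f_{n−1}(x)) be a circulant matrix function satisfying F(x + ω^m y) = Ω^{−m} F(y) Ω^{m} F(x) for all x, y ∈ ℂ. Then there exists an exponential function g: ℂ → ℂ such that f_j(x) = (1/n) Σ_{k=0}^{n−1} ω^{−jk} g(ω^k x) for every j ∈ {0,…,n−1} and every x ∈ ℂ. -/

import Mathlib

/-!
Taking the discrete Fourier transform `L r x = ∑ j, ω ^ (j * r) * f j x` of the first row
diagonalises the circulant equation: it becomes `L r (x + ω ^ m * y) = L (r + m) y * L r x`.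
Putting `y = 0` shows that `L (r + m) ≡ 0` forces `L r ≡ 0`; as `m` generates `ℤ/n`, either
all `L r` vanish or all satisfy `L r 0 = 1`. In both cases `x = 0` gives
`L (r + m) y = L r (ω ^ m * y)`, hence `L r y = L 0 (ω ^ r * y)`. So `g = L 0` is exponential,
and Fourier inversion expresses `f j` through `g`.
-/

open Finset Matrix

theorem Fin.val_nsmul {n : ℕ} [NeZero n] (k : ℕ) (a : Fin n) :
    ((k • a : Fin n) : ℕ) = k * a % n := by
  induction k with
  | zero => simp
  | succ k ih => rw [succ_nsmul, Fin.val_add, ih, Nat.mod_add_mod, Nat.succ_mul]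

theorem Fin.exists_nsmul_eq_of_coprime {n : ℕ} [NeZero n] {a : Fin n} (ha : Nat.Coprime n a)
    (r : Fin n) : ∃ k : ℕ, k • a = r := by
  obtain hn | hn := (NeZero.one_le : 1 ≤ n).eq_or_lt
  · subst hn
    exact ⟨0, Subsingleton.elim _ _⟩
  obtain ⟨b, -, hb⟩ := Nat.exists_mul_mod_eq_one_of_coprime ha.symm hn
  refine ⟨r * b, Fin.ext ?_⟩
  rw [Fin.val_nsmul, mul_assoc, Nat.mul_mod, mul_comm b, hb, mul_one, Nat.mod_mod,
    Nat.mod_eq_of_lt r.isLt]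

section RootOfUnity

variable {M : Type*} [Monoid M] {n : ℕ} {ζ : M}

theorem pow_finVal_add (hζ : ζ ^ n = 1) (a b : Fin n) :
    ζ ^ ((a + b : Fin n) : ℕ) = ζ ^ (a : ℕ) * ζ ^ (b : ℕ) := by
  rw [Fin.val_add, ← pow_eq_pow_mod _ hζ, pow_add]

theorem pow_finVal_nsmul [NeZero n] (hζ : ζ ^ n = 1) (k : ℕ) (a : Fin n) :
    ζ ^ ((k • a : Fin n) : ℕ) = (ζ ^ (a : ℕ)) ^ k := by
  rw [Fin.val_nsmul, ← pow_eq_pow_mod _ hζ, ← pow_mul, mul_comm]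

end RootOfUnity

theorem sum_fin_pow_eq_zero {K : Type*} [DivisionRing K] {n : ℕ} {ζ : K} (hζ : ζ ^ n = 1)
    (h1 : ζ ≠ 1) : ∑ k : Fin n, ζ ^ (k : ℕ) = 0 := by
  rw [Fin.sum_univ_eq_sum_range (ζ ^ ·), geom_sum_eq h1, hζ, sub_self, zero_div]

section DFT

variable {R : Type*} [CommRing R] {n : ℕ}

def finDFT (ω : R) (v : Fin n → R) (r : Fin n) : R :=
  ∑ j : Fin n, (ω ^ (j : ℕ)) ^ (r : ℕ) * v j

variable {ω : R}

theorem finDFT_convolution [NeZero n] (hω : ω ^ n = 1) (a b : Fin n → R) (r : Fin n) :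
    finDFT ω (fun t => ∑ k, a k * b (t - k)) r = finDFT ω a r * finDFT ω b r := by
  simp only [finDFT]
  rw [sum_mul_sum]
  simp only [mul_sum]
  rw [sum_comm]
  refine sum_congr rfl fun k _ => (Fintype.sum_equiv (Equiv.addRight k) _ _ fun s => ?_).symm
  rw [Equiv.coe_addRight, add_sub_cancel_right, pow_finVal_add hω, mul_pow]
  ring

theorem finDFT_pow_mul [NeZero n] (hω : ω ^ n = 1) (a : Fin n → R) (r m : Fin n) :
    finDFT ω (fun k => (ω ^ (k : ℕ)) ^ (m : ℕ) * a k) r = finDFT ω a (r + m) := by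
  unfold finDFT
  refine sum_congr rfl fun k _ => ?_
  have hωk : (ω ^ (k : ℕ)) ^ n = 1 := by rw [← pow_mul, mul_comm, pow_mul, hω, one_pow]
  rw [pow_finVal_add hωk, ← mul_assoc]

theorem sum_zpow_mul_finDFT {K : Type*} [Field K] {ω : K} (hω : IsPrimitiveRoot ω n)
    (v : Fin n → K) (j : Fin n) :
    ∑ k : Fin n, ω ^ (-((j : ℕ) * (k : ℕ) : ℤ)) * finDFT ω v k = n * v j := by
  have hωj : ω ^ (j : ℕ) ≠ 0 := pow_ne_zero _ (hω.ne_zero j.pos.ne')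
  calc ∑ k : Fin n, ω ^ (-((j : ℕ) * (k : ℕ) : ℤ)) * finDFT ω v k
      = ∑ t : Fin n, (∑ k : Fin n, (ω ^ (t : ℕ) / ω ^ (j : ℕ)) ^ (k : ℕ)) * v t := by
        simp only [finDFT, mul_sum, sum_mul]
        rw [sum_comm]
        refine sum_congr rfl fun t _ => sum_congr rfl fun k _ => ?_
        rw [_root_.zpow_neg, ← Nat.cast_mul, zpow_natCast, pow_mul, div_pow, div_eq_inv_mul]
        ring
    _ = n * v j := by
        rw [sum_eq_single j]
        · simp [div_self hωj]
        · intro t _ htj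
          have hroot : (ω ^ (t : ℕ) / ω ^ (j : ℕ)) ^ n = 1 := by
            rw [div_pow, ← pow_mul, ← pow_mul, mul_comm, pow_mul, mul_comm (j : ℕ), pow_mul,
              hω.pow_eq_one, one_pow, one_pow, div_one]
          have hne : ω ^ (t : ℕ) / ω ^ (j : ℕ) ≠ 1 := by
            rw [Ne, div_eq_one_iff_eq hωj]
            exact fun h => htj (Fin.ext (hω.pow_inj t.isLt j.isLt h))
          rw [sum_fin_pow_eq_zero hroot hne, zero_mul]
        · simp

end DFT

section TwistedMultiplicative

variable {G K M : Type*} [AddCommGroup G] [Field K] [CommMonoidWithZero M]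

def IsTwistedMultiplicative (L : G → K → M) (m : G) (c : K) : Prop :=
  ∀ r x y, L r (x + c * y) = L (r + m) y * L r x

namespace IsTwistedMultiplicative

variable {L : G → K → M} {m : G} {c : K}

theorem eq_zero_of_add_nsmul (hL : IsTwistedMultiplicative L m c) (k : ℕ) {r : G}
    (hr : ∀ x, L (r + k • m) x = 0) : ∀ x, L r x = 0 := by
  induction k generalizing r with
  | zero => simpa using hr
  | succ k ih =>
    have hrm : ∀ x, L (r + m) x = 0 :=
      ih fun x => by rw [add_assoc, ← succ_nsmul']; exact hr x
    intro x
    simpa [hrm 0] using hL r x 0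

theorem eq_zero_of_forall_eq_zero (hL : IsTwistedMultiplicative L m c)
    (hgen : ∀ r : G, ∃ k : ℕ, k • m = r) {r : G} (hr : ∀ x, L r x = 0) (s : G) (x : K) :
    L s x = 0 := by
  obtain ⟨k, hk⟩ := hgen (r - s)
  exact hL.eq_zero_of_add_nsmul k (by rwa [hk, add_sub_cancel]) x

theorem apply_zero_eq_one [IsCancelMulZero M] (hL : IsTwistedMultiplicative L m c)
    (hne : ∀ r, ∃ x, L r x ≠ 0) (r : G) : L r 0 = 1 := by
  obtain ⟨x, hx⟩ := hne (r - m)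
  have h := hL (r - m) x 0
  rw [mul_zero, add_zero, sub_add_cancel] at h
  exact mul_right_cancel₀ hx (by rw [one_mul, ← h])

theorem apply_add [IsCancelMulZero M] (hL : IsTwistedMultiplicative L m c)
    (hgen : ∀ r : G, ∃ k : ℕ, k • m = r) (r : G) (y : K) : L (r + m) y = L r (c * y) := by
  by_cases hz : ∃ r, ∀ x, L r x = 0
  · obtain ⟨r₀, hr₀⟩ := hz
    rw [hL.eq_zero_of_forall_eq_zero hgen hr₀, hL.eq_zero_of_forall_eq_zero hgen hr₀]
  · push Not at hz
    have h := hL r 0 y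
    rwa [zero_add, hL.apply_zero_eq_one hz, mul_one, eq_comm] at h

theorem apply_nsmul [IsCancelMulZero M] (hL : IsTwistedMultiplicative L m c)
    (hgen : ∀ r : G, ∃ k : ℕ, k • m = r) (k : ℕ) (y : K) :
    L (k • m) y = L 0 (c ^ k * y) := by
  induction k generalizing y with
  | zero => simp
  | succ k ih => rw [succ_nsmul, hL.apply_add hgen, ih, pow_succ, mul_assoc]

theorem map_add [IsCancelMulZero M] (hL : IsTwistedMultiplicative L m c)
    (hgen : ∀ r : G, ∃ k : ℕ, k • m = r) (hc : c ≠ 0) (x y : K) :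
    L 0 (x + y) = L 0 x * L 0 y := by
  calc L 0 (x + y) = L 0 (x + c * (y / c)) := by rw [mul_div_cancel₀ _ hc]
    _ = L (0 + m) (y / c) * L 0 x := hL 0 x _
    _ = L 0 x * L 0 y := by rw [hL.apply_add hgen, mul_div_cancel₀ _ hc, mul_comm]

end IsTwistedMultiplicative

end TwistedMultiplicative

theorem circulant_equation_row_zero {K : Type*} [Field K] {n : ℕ} [NeZero n] {ω : K}
    (hω : ω ≠ 0) {m : ℕ} {f : Fin n → K → K} {F : K → Matrix (Fin n) (Fin n) K}
    (hF : ∀ (x : K) (j k : Fin n), F x j k = f (k - j) x)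
    (heq : ∀ x y : K, F (x + ω ^ m * y) =
      (diagonal fun j : Fin n => ω ^ (j : ℕ))⁻¹ ^ m * F y *
        (diagonal fun j : Fin n => ω ^ (j : ℕ)) ^ m * F x)
    (x y : K) (t : Fin n) :
    f t (x + ω ^ m * y) = ∑ k : Fin n, (ω ^ (k : ℕ)) ^ m * f k y * f (t - k) x := by
  have hinv : (diagonal fun j : Fin n => ω ^ (j : ℕ))⁻¹ =
      diagonal fun j : Fin n => (ω ^ (j : ℕ))⁻¹ :=
    inv_eq_left_inv (by simp [diagonal_mul_diagonal, inv_mul_cancel₀ (pow_ne_zero _ hω)])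
  have h := congrFun (congrFun (heq x y) 0) t
  rw [hinv, diagonal_pow, diagonal_pow, mul_apply] at h
  simp only [diagonal_mul, mul_diagonal, hF, Pi.pow_apply, Fin.val_zero, pow_zero, inv_one,
    one_pow, one_mul, sub_zero] at h
  rw [h]
  exact sum_congr rfl fun k _ => by ring

theorem general_solution_of_circulant_equation_coprime_general
    (n : ℕ)
    (ω : ℂ) (hω : ω = Complex.exp (2 * Real.pi * Complex.I / n))
    (m : ℕ) (hm : m < n) (hcop : Nat.gcd n m = 1)
    (Om : Matrix (Fin n) (Fin n) ℂ)
    (hOm : Om = Matrix.diagonal fun j : Fin n => ω ^ (j : ℕ))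
    (f : Fin n → ℂ → ℂ)
    (F : ℂ → Matrix (Fin n) (Fin n) ℂ)
    (hF : ∀ (x : ℂ) (j k : Fin n), F x j k = f (k - j) x)
    (heq : ∀ x y : ℂ, F (x + ω ^ m * y) = Om⁻¹ ^ m * F y * Om ^ m * F x) :
    ∃ g : ℂ → ℂ,
      (∀ x y : ℂ, g (x + y) = g x * g y) ∧
      (∀ (j : Fin n) (x : ℂ),
        f j x = (1 / n : ℂ) * ∑ k : Fin n,
          ω ^ (-((j : ℕ) * (k : ℕ) : ℤ)) * g (ω ^ (k : ℕ) * x)) := by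
  have : NeZero n := ⟨by omega⟩
  have hprim : IsPrimitiveRoot ω n := hω ▸ Complex.isPrimitiveRoot_exp n (NeZero.ne n)
  have hω0 : ω ≠ 0 := hprim.ne_zero (NeZero.ne n)
  subst hOm
  let m' : Fin n := ⟨m, hm⟩
  let L : Fin n → ℂ → ℂ := fun r x => finDFT ω (fun j => f j x) r
  have hL : IsTwistedMultiplicative L m' (ω ^ m) := fun r x y => by
    simp only [L, circulant_equation_row_zero hω0 hF heq]
    rw [finDFT_convolution hprim.pow_eq_one (fun k => (ω ^ (k : ℕ)) ^ (m' : ℕ) * f k y)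
        (f · x),
      finDFT_pow_mul hprim.pow_eq_one]
  have hgen : ∀ r : Fin n, ∃ k : ℕ, k • m' = r := Fin.exists_nsmul_eq_of_coprime hcop
  have hL_eq : ∀ (r : Fin n) x, L 0 (ω ^ (r : ℕ) * x) = L r x := by
    intro r x
    obtain ⟨k, rfl⟩ := hgen r
    rw [hL.apply_nsmul hgen, pow_finVal_nsmul hprim.pow_eq_one]
  refine ⟨L 0, hL.map_add hgen (pow_ne_zero m hω0), fun j x => ?_⟩
  simp only [hL_eq]
  rw [sum_zpow_mul_finDFT hprim, one_div,
    inv_mul_cancel_left₀ (Nat.cast_ne_zero.mpr (NeZero.ne n))]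

/-- Let `n ≥ 2`, let `m ∈ {0,…,n−1}` with `gcd(n,m) = 1`, and
let `F(x) = circ(f₀(x),…,f_{n−1}(x))` be a circulant matrix function satisfying
`F(x + ω^m y) = Ω^(−m) F(y) Ω^m F(x)` for all `x, y ∈ ℂ`. Then there exists an
exponential function `g : ℂ → ℂ` such that
`f_j(x) = (1/n) Σ_{k=0}^{n−1} ω^(−jk) g(ω^k x)` for every `j` and every `x`. -/
theorem general_solution_of_circulant_equation_coprime
    (n : ℕ) (hn : 2 ≤ n)
    (ω : ℂ) (hω : ω = Complex.exp (2 * Real.pi * Complex.I / n))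
    (m : ℕ) (hm : m < n) (hcop : Nat.gcd n m = 1)
    (Om : Matrix (Fin n) (Fin n) ℂ)
    (hOm : Om = Matrix.diagonal fun j : Fin n => ω ^ (j : ℕ))
    (f : Fin n → ℂ → ℂ)
    (F : ℂ → Matrix (Fin n) (Fin n) ℂ)
    (hF : ∀ (x : ℂ) (j k : Fin n), F x j k = f (k - j) x)
    (heq : ∀ x y : ℂ, F (x + ω ^ m * y) = Om⁻¹ ^ m * F y * Om ^ m * F x) :
    ∃ g : ℂ → ℂ,
      (∀ x y : ℂ, g (x + y) = g x * g y) ∧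
      (∀ (j : Fin n) (x : ℂ),
        f j x = (1 / n : ℂ) * ∑ k : Fin n,
          ω ^ (-((j : ℕ) * (k : ℕ) : ℤ)) * g (ω ^ (k : ℕ) * x)) :=
  general_solution_of_circulant_equation_coprime_general n ω hω m hm hcop Om hOm f F hF heq
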